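/- If C is a direct category (i.e., it admits a functor to the poset ℕ sending nonidentity morphisms to strict inequalities), then its subdivision Sd(C) is a poset: there is at most one morphism between any two objects of Sd(C), and mutual morphisms force equality. -/

import Mathlib

open CategoryTheory

/-- The category `Δ/C` of simplices of the nerve of `C`: objects are functors
`[q] ⥤ C`, morphisms are monotone reindexings commuting with the structure maps. -/
abbrev SimplexOver (C : Type) [SmallCategory C] : Type :=
  CostructuredArrow SimplexCategory.toCat (Cat.of C)

/-- The elementary relation: for a surjection `s : [q+1] → [q]` with `B = A ∘ s`,
any two sections of `s` induce elementary equivalent maps `A ⟶ B`. -/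
def elemRel (C : Type) [SmallCategory C] : HomRel (SimplexOver C) := fun {A B} f g =>
  ∃ s : B.left ⟶ A.left,
    Function.Surjective s.toOrderHom ∧
    B.left.len = A.left.len + 1 ∧
    B.hom = SimplexCategory.toCat.map s ≫ A.hom ∧
    f.left ≫ s = 𝟙 A.left ∧ g.left ≫ s = 𝟙 A.left

/-- The quotient category `[Δ/C]` of `Δ/C` by the smallest composition-compatible
equivalence relation generated by the elementary equivalences. -/
abbrev SdQuot (C : Type) [SmallCategory C] : Type :=
  CategoryTheory.Quotient (elemRel C)

/-- A simplex of the nerve of `C` is nondegenerate if it factors through no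
noninjective surjection. -/
def Nondeg {C : Type} [SmallCategory C] (X : SimplexOver C) : Prop :=
  ∀ (m : SimplexCategory) (s : X.left ⟶ m),
    Function.Surjective s.toOrderHom →
    (∃ Y : SimplexCategory.toCat.obj m ⟶ Cat.of C,
      X.hom = SimplexCategory.toCat.map s ≫ Y) →
    Function.Injective s.toOrderHom

/-- The subdivision `Sd(C)`: the full subcategory of `[Δ/C]` spanned by the
nondegenerate simplices of the nerve of `C`. -/
abbrev Sd (C : Type) [SmallCategory C] : Type :=
  ObjectProperty.FullSubcategory (fun X : SdQuot C => Nondeg X.as)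

/-- The dimension of an object of `Sd(C)`. -/
def dimS {C : Type} [SmallCategory C] (X : Sd C) : ℕ := X.obj.as.left.len

/-! In a nondegenerate simplex of a direct category the degrees of the vertices strictly
increase: if a step `k ⟶ k + 1` did not raise the degree it would be an identity, and the
simplex would factor through the degeneracy `σ k`. So an object of `Sd(C)` has pairwise distinct
vertices. A map of simplices preserves vertices, hence into such a simplex it is unique and from
such a simplex it is injective; mutual maps thus force equal dimensions, and then the reindexing is
the identity. Both properties pass to `[Δ/C]`, whose maps are represented by maps of `Δ/C`. -/

open SimplexCategory Simplicial

lemma CategoryTheory.Functor.eq_comp_of_map_le_eq_eqToHom {α D : Type*} [Preorder α] [Category D]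
    (F : α ⥤ D) (c : α ⥤ α) (hle : ∀ i, i ≤ c.obj i)
    (hF : ∀ i, ∃ e : F.obj i = F.obj (c.obj i), F.map (homOfLE (hle i)) = eqToHom e) :
    F = c ⋙ F := by
  choose e he using hF
  refine Functor.ext_of_iso (NatIso.ofComponents (fun i => eqToIso (e i)) fun {i j} f => ?_) e
    fun _ => rfl
  simp only [eqToIso.hom, ← he, Functor.comp_map, ← F.map_comp]
  -- `α` is thin: both sides are `F` of the unique arrow `i ⟶ c.obj j`
  rfl

lemma SimplexCategory.σ_comp_δ_castSucc_apply {n : ℕ} (k : Fin (n + 1)) (i : Fin (n + 2)) :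
    (σ k ≫ δ k.castSucc).toOrderHom i = if i = k.castSucc then k.succ else i := by
  split_ifs with hi
  · subst hi
    simp [σ, δ]
  · exact Fin.succAbove_predAbove hi

namespace SimplexOver

variable {C : Type} [SmallCategory C]

def vertex (A : SimplexOver C) (i : Fin (A.left.len + 1)) : C := A.hom.toFunctor.obj i

lemma vertex_hom_left {A B : SimplexOver C} (f : A ⟶ B) (i : Fin (A.left.len + 1)) :
    B.vertex (f.left.toOrderHom i) = A.vertex i :=
  Functor.congr_obj (congrArg Cat.Hom.toFunctor (CostructuredArrow.w f)) i

lemma injective_hom_left {A B : SimplexOver C} (hA : Function.Injective A.vertex) (f : A ⟶ B) :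
    Function.Injective f.left.toOrderHom := by
  refine Function.Injective.of_comp (f := B.vertex) ?_
  simpa only [Function.comp_def, vertex_hom_left] using hA

lemma subsingleton_hom {A B : SimplexOver C} (hB : Function.Injective B.vertex) :
    Subsingleton (A ⟶ B) where
  allEq f g := by
    ext : 1
    exact Hom.ext _ _ (OrderHom.ext _ _ (funext fun i => hB <|
      (vertex_hom_left f i).trans (vertex_hom_left g i).symm))

lemma eq_of_hom_of_hom {A B : SimplexOver C} (hA : Function.Injective A.vertex)
    (hB : Function.Injective B.vertex) (f : A ⟶ B) (g : B ⟶ A) : A = B := by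
  have hlen : A.left.len = B.left.len := by
    apply le_antisymm
    · simpa using Fintype.card_le_of_injective _ (injective_hom_left hA f)
    · simpa using Fintype.card_le_of_injective _ (injective_hom_left hB g)
  obtain ⟨⟨n⟩, ⟨⟨⟩⟩, F⟩ := A
  obtain ⟨⟨m⟩, ⟨⟨⟩⟩, G⟩ := B
  obtain rfl : n = m := hlen
  have : Mono f.left := mono_iff_injective.mpr (injective_hom_left hA f)
  have hw := CostructuredArrow.w f
  simp only [eq_id_of_mono f.left, CategoryTheory.Functor.map_id, Category.id_comp] at hw
  obtain rfl : G = F := hw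
  rfl

end SimplexOver

variable {C : Type} [SmallCategory C]

def IsDirectDegree (deg : C → ℕ) : Prop :=
  ∀ (X Y : C) (f : X ⟶ Y), (¬∃ h : X = Y, f = eqToHom h) → deg X < deg Y

lemma IsDirectDegree.exists_eq_eqToHom {deg : C → ℕ} (hdeg : IsDirectDegree deg) {X Y : C}
    (f : X ⟶ Y) (h : deg Y ≤ deg X) : ∃ e : X = Y, f = eqToHom e := by
  by_contra hf
  exact (hdeg X Y f hf).not_ge h

lemma Nondeg.deg_obj_castSucc_lt {deg : C → ℕ} (hdeg : IsDirectDegree deg) {n : ℕ}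
    {H : toCat.obj ⦋n + 1⦌ ⟶ Cat.of C} (hH : Nondeg (CostructuredArrow.mk H)) (k : Fin (n + 1)) :
    deg (H.toFunctor.obj k.castSucc) < deg (H.toFunctor.obj k.succ) := by
  by_contra! hle
  set F : Fin (n + 2) ⥤ C := H.toFunctor
  set c : Fin (n + 2) ⥤ Fin (n + 2) := (toCat.map (σ k ≫ δ k.castSucc)).toFunctor
  have hc (i : Fin (n + 2)) : c.obj i = if i = k.castSucc then k.succ else i :=
    σ_comp_δ_castSucc_apply k i
  have hc_le (i : Fin (n + 2)) : i ≤ c.obj i := by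
    rw [hc]; split_ifs with hi
    · exact hi ▸ Fin.castSucc_le_succ k
    · rfl
  have hdeg_c (i : Fin (n + 2)) : deg (F.obj (c.obj i)) ≤ deg (F.obj i) := by
    rw [hc]; split_ifs with hi
    · exact hi ▸ hle
    · rfl
  -- every step `i ⟶ c i` now fails to raise the degree, so it is an identity
  have hfac : H = toCat.map (σ k) ≫ toCat.map (δ k.castSucc) ≫ H := by
    rw [← Category.assoc, ← CategoryTheory.Functor.map_comp]
    exact Cat.Hom.ext (CategoryTheory.Functor.eq_comp_of_map_le_eq_eqToHom F c hc_le
      fun i => hdeg.exists_eq_eqToHom _ (hdeg_c i))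
  have hσ := hH _ (σ k) (epi_iff_surjective.mp inferInstance) ⟨_, hfac⟩
  exact (Fin.castSucc_lt_succ (i := k)).ne <| hσ <|
    (Fin.predAbove_castSucc_self k).trans (Fin.predAbove_succ_self k).symm

lemma Nondeg.strictMono_deg_vertex {deg : C → ℕ} (hdeg : IsDirectDegree deg) {A : SimplexOver C}
    (hA : Nondeg A) : StrictMono (deg ∘ A.vertex) := by
  obtain ⟨⟨n⟩, ⟨⟨⟩⟩, H⟩ := A
  refine Fin.strictMono_iff_lt_succ.2 fun k => ?_
  cases n with
  | zero => exact k.elim0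
  | succ n => exact hA.deg_obj_castSucc_lt hdeg k

lemma CategoryTheory.Quotient.subsingleton_hom {D : Type*} [Category D] {r : HomRel D}
    {X Y : Quotient r} [Subsingleton (X.as ⟶ Y.as)] : Subsingleton (X ⟶ Y) :=
  (Quotient.functor r).map_surjective.subsingleton

lemma Sd.ext {X Y : Sd C} (h : X.obj.as = Y.obj.as) : X = Y :=
  ObjectProperty.FullSubcategory.ext (CategoryTheory.Quotient.ext h)

lemma Sd.subsingleton_hom {X Y : Sd C} [Subsingleton (X.obj.as ⟶ Y.obj.as)] :
    Subsingleton (X ⟶ Y) :=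
  have := CategoryTheory.Quotient.subsingleton_hom (X := X.obj) (Y := Y.obj)
  ⟨fun _ _ => ObjectProperty.hom_ext _ (Subsingleton.elim _ _)⟩

/-- Remark 22: if `C` is a direct category (it admits a degree function to `ℕ` sending
nonidentity morphisms to strict inequalities), then `Sd(C)` is a poset. -/
theorem sd_is_poset_of_direct (C : Type) [SmallCategory C] (deg : C → ℕ)
    (hdeg : ∀ (X Y : C) (f : X ⟶ Y),
      (¬∃ h : X = Y, f = eqToHom h) → deg X < deg Y) :
    (∀ X Y : Sd C, Subsingleton (X ⟶ Y)) ∧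
    (∀ X Y : Sd C, (X ⟶ Y) → (Y ⟶ X) → X = Y) := by
  have hinj (X : Sd C) : Function.Injective X.obj.as.vertex :=
    (X.property.strictMono_deg_vertex hdeg).injective.of_comp
  refine ⟨fun X Y => ?_, fun X Y f g => Sd.ext ?_⟩
  · have := SimplexOver.subsingleton_hom (A := X.obj.as) (hinj Y)
    exact Sd.subsingleton_hom
  · exact SimplexOver.eq_of_hom_of_hom (hinj X) (hinj Y)
      ((Quotient.functor _).preimage f.hom) ((Quotient.functor _).preimage g.hom)
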